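/- arXiv:2110.05872 — 5 statements merged into one kernel-verified Lean document; each statement's English description precedes it below -/
import Mathlib

section
/- Let Λ be a left cancellative small category and let d : Λ → Γ be a length function satisfying the weak factorization property. Then d⁻¹(1) = Λ⁻¹, i.e. a morphism α of Λ satisfies d(α) = 1 if and only if α is invertible (in particular every identity morphism and every invertible morphism has length 1, and conversely every morphism of length 1 is invertible). -/
/-- A left cancellative small category (LCSC), presented as a set of morphisms
with source and range maps and a (total, but only meaningful on composable
pairs) composition. Identities are the morphisms of the form `src a` / `ran a`. -/
structure LCSC where
  Mor : Type
  src : Mor → Mor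
  ran : Mor → Mor
  comp : Mor → Mor → Mor
  src_src : ∀ a, src (src a) = src a
  ran_src : ∀ a, ran (src a) = src a
  src_ran : ∀ a, src (ran a) = ran a
  ran_ran : ∀ a, ran (ran a) = ran a
  comp_src : ∀ a, comp a (src a) = a
  id_comp : ∀ a, comp (ran a) a = a
  src_comp : ∀ a b, src a = ran b → src (comp a b) = src b
  ran_comp : ∀ a b, src a = ran b → ran (comp a b) = ran a
  assoc : ∀ a b c, src a = ran b → src b = ran c →
      comp (comp a b) c = comp a (comp b c)
  leftCancel : ∀ a b c, src a = ran b → src a = ran c →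
      comp a b = comp a c → b = c

namespace LCSC

variable (C : LCSC)

/-- `v` is an identity morphism (an object of `Λ⁰`). -/
def IsId (v : C.Mor) : Prop := C.src v = v ∧ C.ran v = v

/-- `a ∈ Λ⁻¹`, i.e. `a` is invertible. -/
def IsInvertible (a : C.Mor) : Prop :=
  ∃ b, C.src a = C.ran b ∧ C.src b = C.ran a ∧
    C.comp a b = C.ran a ∧ C.comp b a = C.src a

/-- The principal right ideal `aΛ`. -/
def Ideal (a : C.Mor) : Set C.Mor :=
  {x | ∃ c, C.src a = C.ran c ∧ x = C.comp a c}

/-- `a ≤ b` iff `b ∈ aΛ`, i.e. `a` is an initial segment of `b`. -/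
def le (a b : C.Mor) : Prop := b ∈ C.Ideal a

end LCSC
/-- `d : Λ → Γ ⊆ Q` is a length function: it takes values in the submonoid `Γ`
and is multiplicative on composable pairs. -/
def LCSC.LenFn (C : LCSC) {Q : Type} [Group Q] (Γ : Submonoid Q)
    (d : C.Mor → Q) : Prop :=
  (∀ a, d a ∈ Γ) ∧ ∀ a b, C.src a = C.ran b → d (C.comp a b) = d a * d b

/-- The weak factorization property (WFP) for a length function `d : Λ → Γ`. -/
def LCSC.WFP (C : LCSC) {Q : Type} [Group Q] (Γ : Submonoid Q)
    (d : C.Mor → Q) : Prop :=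
  ∀ a γ₁ γ₂, γ₁ ∈ Γ → γ₂ ∈ Γ → d a = γ₁ * γ₂ →
    ∃ a₁ a₂, C.src a₁ = C.ran a₂ ∧ a = C.comp a₁ a₂ ∧ d a₁ = γ₁ ∧ d a₂ = γ₂ ∧
      ∀ b₁ b₂, C.src b₁ = C.ran b₂ → a = C.comp b₁ b₂ → d b₁ = γ₁ → d b₂ = γ₂ →
        ∃ g₁ g₂, C.IsInvertible g₁ ∧ C.IsInvertible g₂ ∧
          C.src a₁ = C.ran g₁ ∧ b₁ = C.comp a₁ g₁ ∧
          C.src g₂ = C.ran a₂ ∧ b₂ = C.comp g₂ a₂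

/-
If `d a = 1`, compare the factorization `a = a₁ a₂` of type `(1, 1)` given by the WFP with the
factorizations `a = (ran a) a` and `a = a (src a)`: the first gives `a = g a₂` and the second
`src a = g' a₂` with `g`, `g'` invertible, so `a₂` and hence `a` are invertible.
Conversely, if `a b` and `b a` are identities then `d a * d b = 1`, so `d a` and its inverse both
lie in `Γ`, forcing `d a = 1`.
-/

namespace LCSC

variable {C : LCSC}

theorem isId_ran (a : C.Mor) : C.IsId (C.ran a) := ⟨C.src_ran a, C.ran_ran a⟩

theorem isId_src (a : C.Mor) : C.IsId (C.src a) := ⟨C.src_src a, C.ran_src a⟩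

theorem IsInvertible.comp {x y : C.Mor} (hx : C.IsInvertible x) (hy : C.IsInvertible y)
    (hxy : C.src x = C.ran y) : C.IsInvertible (C.comp x y) := by
  obtain ⟨u, hxu, hux, hxu1, hux1⟩ := hx
  obtain ⟨v, hyv, hvy, hyv1, hvy1⟩ := hy
  have hranu : C.ran u = C.ran y := by rw [← hxu, hxy]
  have hvu : C.src v = C.ran u := by rw [hvy, hranu]
  have hran_vu : C.ran (C.comp v u) = C.src y := by rw [C.ran_comp v u hvu, hyv]
  refine ⟨C.comp v u, ?_, ?_, ?_, ?_⟩
  · rw [C.src_comp x y hxy, hran_vu]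
  · rw [C.src_comp v u hvu, C.ran_comp x y hxy, hux]
  · calc C.comp (C.comp x y) (C.comp v u)
        = C.comp x (C.comp (C.comp y v) u) := by
          rw [C.assoc x y _ hxy (by rw [hran_vu]), C.assoc y v u hyv (by rw [hvy, hranu])]
      _ = C.ran (C.comp x y) := by
          rw [hyv1, ← hranu, C.id_comp, hxu1, C.ran_comp x y hxy]
  · calc C.comp (C.comp v u) (C.comp x y)
        = C.comp v (C.comp (C.comp u x) y) := by
          rw [C.assoc v u _ hvu (by rw [C.ran_comp x y hxy, hux]), C.assoc u x y hux hxy]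
      _ = C.src (C.comp x y) := by
          rw [hux1, hxy, C.id_comp, hvy1, C.src_comp x y hxy]

theorem isInvertible_of_comp_eq_src {g y : C.Mor} (hg : C.IsInvertible g)
    (hgy : C.src g = C.ran y) (he : C.comp g y = C.src y) : C.IsInvertible y := by
  obtain ⟨k, hgk, hkg, hgk1, hkg1⟩ := hg
  have hrg : C.ran g = C.src y := by rw [← C.ran_src y, ← he, C.ran_comp g y hgy]
  have hyk : y = k :=
    calc y = C.comp (C.comp k g) y := by rw [hkg1, hgy, C.id_comp]
      _ = C.comp k (C.src y) := by rw [C.assoc k g y hkg hgy, he]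
      _ = k := by rw [← hrg, ← hkg, C.comp_src]
  subst hyk
  exact ⟨g, hkg, hgk, hkg1.trans hgk, hgk1.trans hkg.symm⟩

variable {Q : Type} [Group Q] {Γ : Submonoid Q} {d : C.Mor → Q}

theorem LenFn.eq_one_of_isId (hd : C.LenFn Γ d) {v : C.Mor} (hv : C.IsId v) : d v = 1 := by
  have hvv : C.comp v v = v := by simpa only [hv.1] using C.comp_src v
  have h := hd.2 v v (hv.1.trans hv.2.symm)
  rw [hvv] at h
  exact left_eq_mul.mp h

theorem LenFn.eq_one_of_isInvertible (hΓ : ∀ q ∈ Γ, q⁻¹ ∈ Γ → q = 1) (hd : C.LenFn Γ d)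
    {a : C.Mor} (ha : C.IsInvertible a) : d a = 1 := by
  obtain ⟨b, hab, -, hab1, -⟩ := ha
  have h : d a * d b = 1 := by rw [← hd.2 a b hab, hab1, hd.eq_one_of_isId (isId_ran a)]
  refine hΓ (d a) (hd.1 a) ?_
  rw [inv_eq_of_mul_eq_one_right h]
  exact hd.1 b

theorem WFP.isInvertible_of_eq_one (hd : C.LenFn Γ d) (hwfp : C.WFP Γ d) {a : C.Mor}
    (ha : d a = 1) : C.IsInvertible a := by
  obtain ⟨a₁, a₂, h₁₂, rfl, -, -, huniq⟩ :=
    hwfp _ 1 1 Γ.one_mem Γ.one_mem (by rw [ha, one_mul])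
  set a := C.comp a₁ a₂
  obtain ⟨-, g, -, hg, -, -, hg₂, hag⟩ :=
    huniq (C.ran a) a (C.src_ran a) (C.id_comp a).symm (hd.eq_one_of_isId (isId_ran a)) ha
  obtain ⟨-, g', -, hg', -, -, hg'₂, hsrc⟩ :=
    huniq a (C.src a) (C.ran_src a).symm (C.comp_src a).symm ha (hd.eq_one_of_isId (isId_src a))
  have ha₂ : C.IsInvertible a₂ :=
    isInvertible_of_comp_eq_src hg' hg'₂ (by rw [← hsrc, C.src_comp a₁ a₂ h₁₂])
  rw [hag]
  exact hg.comp ha₂ hg₂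

end LCSC

/-- If `d : Λ → Γ` is a length function on an LCSC `Λ` satisfying
the weak factorization property, then `d⁻¹(1) = Λ⁻¹`. -/
theorem lcsc_wfp_length_one_iff_invertible (C : LCSC) {Q : Type} [Group Q]
    (Γ : Submonoid Q) (hΓ : ∀ q ∈ Γ, q⁻¹ ∈ Γ → q = 1)
    (d : C.Mor → Q) (hd : C.LenFn Γ d) (hwfp : C.WFP Γ d) :
    ∀ a : C.Mor, d a = 1 ↔ C.IsInvertible a :=
  fun _ => ⟨hwfp.isInvertible_of_eq_one hd, hd.eq_one_of_isInvertible hΓ⟩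
end

section
/- Let Λ be a left cancellative small category with length function d : Λ → Γ. Given a partial isomorphism f ∈ PIso(Λ, d) with domain object v and any α ∈ vΛ, there exists a unique function f|α : s(α)Λ → s(f(α))Λ belonging to PIso(Λ, d) such that f(αβ) = f(α)·f|α(β) for every β ∈ s(α)Λ. -/
/-- A partial isomorphism `f ∈ PIso(Λ, d)`: a bijection `f : vΛ → wΛ` (for
objects `v = dom`, `w = cod`) with `f(αΛ) = f(α)Λ`, `f(v) = w` and
`d(f(α)) = d(α)`. -/
structure PIso (C : LCSC) {Q : Type} (d : C.Mor → Q) where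
  dom : C.Mor
  cod : C.Mor
  dom_isId : C.IsId dom
  cod_isId : C.IsId cod
  map : (a : C.Mor) → C.ran a = dom → C.Mor
  ran_map : ∀ a (ha : C.ran a = dom), C.ran (map a ha) = cod
  inj : ∀ a b (ha : C.ran a = dom) (hb : C.ran b = dom),
      map a ha = map b hb → a = b
  surj : ∀ b, C.ran b = cod → ∃ a, ∃ ha : C.ran a = dom, map a ha = b
  map_dom : ∀ h : C.ran dom = dom, map dom h = cod
  d_map : ∀ a (ha : C.ran a = dom), d (map a ha) = d a
  ideal_fwd : ∀ a (ha : C.ran a = dom) c (_ : C.src a = C.ran c)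
      (h' : C.ran (C.comp a c) = dom),
      ∃ e, C.src (map a ha) = C.ran e ∧
        map (C.comp a c) h' = C.comp (map a ha) e
  ideal_bwd : ∀ a (ha : C.ran a = dom) e (_ : C.src (map a ha) = C.ran e),
      ∃ c, ∃ _ : C.src a = C.ran c, ∃ h' : C.ran (C.comp a c) = dom,
        map (C.comp a c) h' = C.comp (map a ha) e

/-- The identity partial isomorphism `id_v : vΛ → vΛ`. -/
def idPIso (C : LCSC) {Q : Type} (d : C.Mor → Q) (v : C.Mor) (hv : C.IsId v) :
    PIso C d where
  dom := v
  cod := v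
  dom_isId := hv
  cod_isId := hv
  map a _ := a
  ran_map _ ha := ha
  inj _ _ _ _ h := h
  surj b hb := ⟨b, hb, rfl⟩
  map_dom _ := rfl
  d_map _ _ := rfl
  ideal_fwd _ _ c hc _ := ⟨c, hc, rfl⟩
  ideal_bwd a ha e he := ⟨e, he, (C.ran_comp a e he).trans ha, rfl⟩

/-- `g` is the restriction `f|α` of `f` at `α ∈ dom(f)Λ`: a partial isomorphism
`f|α : s(α)Λ → s(f(α))Λ` satisfying `f(αβ) = f(α)·f|α(β)` for all `β ∈ s(α)Λ`. -/
def IsRestriction (C : LCSC) {Q : Type} (d : C.Mor → Q) (f : PIso C d)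
    (a : C.Mor) (ha : C.ran a = f.dom) (g : PIso C d) : Prop :=
  g.dom = C.src a ∧ g.cod = C.src (f.map a ha) ∧
  ∀ b (_ : C.src a = C.ran b) (h' : C.ran (C.comp a b) = f.dom)
    (hb' : C.ran b = g.dom),
    f.map (C.comp a b) h' = C.comp (f.map a ha) (g.map b hb')

/-! The restriction is forced by left cancellation: for `β ∈ s(α)Λ`, `f(αβ) ∈ f(α)Λ` has the
form `f(α)·e` for a unique `e`, and `f|α(β) := e`. Bijectivity and the ideal conditions for `f|α`
are inherited from those of `f` applied to `αβ`, and `d(f|α(β)) = d(β)` follows by cancelling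
`d(α) = d(f(α))` in `d(f(αβ)) = d(αβ)`. -/

namespace PIso

variable {C : LCSC} {Q : Type} {d : C.Mor → Q}

theorem map_congr (f : PIso C d) {x y : C.Mor} (h : x = y)
    (hx : C.ran x = f.dom) (hy : C.ran y = f.dom) : f.map x hx = f.map y hy := by
  subst h; rfl

theorem ext_of_map {g g' : PIso C d} (hdom : g.dom = g'.dom) (hcod : g.cod = g'.cod)
    (hmap : ∀ b (hb : C.ran b = g.dom) (hb' : C.ran b = g'.dom), g.map b hb = g'.map b hb') :
    g = g' := by
  obtain ⟨dom, cod, _, _, map, _⟩ := g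
  obtain ⟨dom', cod', _, _, map', _⟩ := g'
  obtain rfl : dom = dom' := hdom
  obtain rfl : cod = cod' := hcod
  obtain rfl : map = map' := funext fun b => funext fun hb => hmap b hb hb
  rfl

variable (f : PIso C d) {a : C.Mor}

theorem ran_comp_eq_dom {b : C.Mor} (ha : C.ran a = f.dom) (hb : C.ran b = C.src a) :
    C.ran (C.comp a b) = f.dom :=
  (C.ran_comp a b hb.symm).trans ha

variable (ha : C.ran a = f.dom)

noncomputable def resMap (b : C.Mor) (hb : C.ran b = C.src a) : C.Mor :=
  (f.ideal_fwd a ha b hb.symm (f.ran_comp_eq_dom ha hb)).choose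

theorem ran_resMap {b : C.Mor} (hb : C.ran b = C.src a) :
    C.ran (f.resMap ha b hb) = C.src (f.map a ha) :=
  (f.ideal_fwd a ha b hb.symm (f.ran_comp_eq_dom ha hb)).choose_spec.1.symm

theorem map_comp_eq_comp_resMap {b : C.Mor} (hb : C.ran b = C.src a)
    (h : C.ran (C.comp a b) = f.dom) :
    f.map (C.comp a b) h = C.comp (f.map a ha) (f.resMap ha b hb) :=
  (f.ideal_fwd a ha b hb.symm (f.ran_comp_eq_dom ha hb)).choose_spec.2

theorem eq_resMap_of_map_comp_eq {b e : C.Mor} (hb : C.ran b = C.src a)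
    (he : C.ran e = C.src (f.map a ha)) (h : C.ran (C.comp a b) = f.dom)
    (heq : f.map (C.comp a b) h = C.comp (f.map a ha) e) :
    e = f.resMap ha b hb :=
  C.leftCancel _ _ _ he.symm (f.ran_resMap ha hb).symm
    (heq.symm.trans (f.map_comp_eq_comp_resMap ha hb h))

theorem src_map_comp {b : C.Mor} (hb : C.ran b = C.src a)
    (h : C.ran (C.comp a b) = f.dom) :
    C.src (f.map (C.comp a b) h) = C.src (f.resMap ha b hb) := by
  rw [f.map_comp_eq_comp_resMap ha hb h, C.src_comp _ _ (f.ran_resMap ha hb).symm]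

theorem resMap_comp {b c e : C.Mor} (hb : C.ran b = C.src a) (hbc : C.src b = C.ran c)
    (hbc' : C.ran (C.comp b c) = C.src a) (he : C.src (f.resMap ha b hb) = C.ran e)
    (h : C.ran (C.comp (C.comp a b) c) = f.dom) (h' : C.ran (C.comp a b) = f.dom)
    (heq : f.map (C.comp (C.comp a b) c) h = C.comp (f.map (C.comp a b) h') e) :
    f.resMap ha (C.comp b c) hbc' = C.comp (f.resMap ha b hb) e := by
  refine (f.eq_resMap_of_map_comp_eq ha hbc' ((C.ran_comp _ _ he).trans (f.ran_resMap ha hb))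
    (f.ran_comp_eq_dom ha hbc') ?_).symm
  rw [← f.map_congr (C.assoc a b c hb.symm hbc) h, heq, f.map_comp_eq_comp_resMap ha hb h',
    C.assoc _ _ _ (f.ran_resMap ha hb).symm he]

theorem resMap_injective {b b' : C.Mor} (hb : C.ran b = C.src a) (hb' : C.ran b' = C.src a)
    (heq : f.resMap ha b hb = f.resMap ha b' hb') : b = b' := by
  have hmap : f.map (C.comp a b) (f.ran_comp_eq_dom ha hb) =
      f.map (C.comp a b') (f.ran_comp_eq_dom ha hb') := by
    rw [f.map_comp_eq_comp_resMap ha hb, f.map_comp_eq_comp_resMap ha hb', heq]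
  exact C.leftCancel a b b' hb.symm hb'.symm (f.inj _ _ _ _ hmap)

theorem resMap_src : f.resMap ha (C.src a) (C.ran_src a) = C.src (f.map a ha) := by
  refine (f.eq_resMap_of_map_comp_eq ha _ (C.ran_src _)
    (f.ran_comp_eq_dom ha (C.ran_src a)) ?_).symm
  rw [f.map_congr (C.comp_src a) _ ha, C.comp_src]

theorem d_resMap [Mul Q] [IsLeftCancelMul Q]
    (hd : ∀ x y, C.src x = C.ran y → d (C.comp x y) = d x * d y)
    {b : C.Mor} (hb : C.ran b = C.src a) : d (f.resMap ha b hb) = d b := by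
  have h := congrArg d (f.map_comp_eq_comp_resMap ha hb (f.ran_comp_eq_dom ha hb))
  rw [f.d_map, hd _ _ hb.symm, hd _ _ (f.ran_resMap ha hb).symm, f.d_map] at h
  exact (mul_left_cancel h).symm

noncomputable def restrict [Mul Q] [IsLeftCancelMul Q]
    (hd : ∀ x y, C.src x = C.ran y → d (C.comp x y) = d x * d y) : PIso C d where
  dom := C.src a
  cod := C.src (f.map a ha)
  dom_isId := ⟨C.src_src a, C.ran_src a⟩
  cod_isId := ⟨C.src_src _, C.ran_src _⟩
  map := f.resMap ha
  ran_map _ := f.ran_resMap ha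
  inj _ _ := f.resMap_injective ha
  surj e he := by
    obtain ⟨c, hc, h, heq⟩ := f.ideal_bwd a ha e he.symm
    exact ⟨c, hc.symm, (f.eq_resMap_of_map_comp_eq ha hc.symm he h heq).symm⟩
  map_dom _ := f.resMap_src ha
  d_map _ := f.d_resMap ha hd
  ideal_fwd b hb c hc h := by
    have hab := f.ran_comp_eq_dom ha hb
    have habc : C.src (C.comp a b) = C.ran c := (C.src_comp a b hb.symm).trans hc
    obtain ⟨e, he, heq⟩ :=
      f.ideal_fwd _ hab c habc ((C.ran_comp _ c habc).trans hab)
    rw [f.src_map_comp ha hb] at he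
    exact ⟨e, he, f.resMap_comp ha hb hc h he _ hab heq⟩
  ideal_bwd b hb e he := by
    have hab := f.ran_comp_eq_dom ha hb
    obtain ⟨c, habc, h, heq⟩ := f.ideal_bwd _ hab e ((f.src_map_comp ha hb hab).trans he)
    have hbc : C.src b = C.ran c := (C.src_comp a b hb.symm).symm.trans habc
    have hbc' : C.ran (C.comp b c) = C.src a := (C.ran_comp b c hbc).trans hb
    exact ⟨c, hbc, hbc', f.resMap_comp ha hb hbc hbc' he h hab heq⟩

end PIso

theorem piso_restriction_exists_unique_general (C : LCSC) {Q : Type} [Group Q]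
    (Γ : Submonoid Q)
    (d : C.Mor → Q) (hd : C.LenFn Γ d)
    (f : PIso C d) (a : C.Mor) (ha : C.ran a = f.dom) :
    ∃! g : PIso C d, IsRestriction C d f a ha g := by
  refine ⟨f.restrict ha hd.2,
    ⟨rfl, rfl, fun b hb h _ => f.map_comp_eq_comp_resMap ha hb.symm h⟩, ?_⟩
  rintro g ⟨hdom, hcod, hmap⟩
  refine PIso.ext_of_map hdom hcod fun b hb hb' => ?_
  have h := f.ran_comp_eq_dom ha hb'
  exact f.eq_resMap_of_map_comp_eq ha hb' ((g.ran_map b hb).trans hcod) h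
    (hmap b hb'.symm h hb)

/-- For `f ∈ PIso(Λ, d)` and `α ∈ dom(f)Λ`, there is a unique
partial isomorphism `f|α : s(α)Λ → s(f(α))Λ` in `PIso(Λ, d)` such that
`f(αβ) = f(α)·f|α(β)` for every `β ∈ s(α)Λ`. -/
theorem piso_restriction_exists_unique (C : LCSC) {Q : Type} [Group Q]
    (Γ : Submonoid Q) (hΓ : ∀ q ∈ Γ, q⁻¹ ∈ Γ → q = 1)
    (d : C.Mor → Q) (hd : C.LenFn Γ d)
    (f : PIso C d) (a : C.Mor) (ha : C.ran a = f.dom) :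
    ∃! g : PIso C d, IsRestriction C d f a ha g :=
  piso_restriction_exists_unique_general C Γ d hd f a ha
end

section
/- Let (Λ, d, G, φ) be a category system and Λ ⋈ᵠ G the associated Zappa–Szép product. Fix an object (v, v) of Λ ⋈ᵠ G, let F ⊆ (v, v)(Λ ⋈ᵠ G), and set H := {α ∈ vΛ : there exists g ∈ G with (α, g) ∈ F}. Then F is exhaustive at (v, v) if and only if H is exhaustive at v. -/
/-- A discrete groupoid, presented as a set of morphisms with source, range,
composition (total, but only meaningful on composable pairs) and inverse. -/
structure Grpd where
  Mor : Type
  src : Mor → Mor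
  ran : Mor → Mor
  comp : Mor → Mor → Mor
  inv : Mor → Mor
  src_src : ∀ a, src (src a) = src a
  ran_src : ∀ a, ran (src a) = src a
  src_ran : ∀ a, src (ran a) = ran a
  ran_ran : ∀ a, ran (ran a) = ran a
  comp_src : ∀ a, comp a (src a) = a
  id_comp : ∀ a, comp (ran a) a = a
  src_comp : ∀ a b, src a = ran b → src (comp a b) = src b
  ran_comp : ∀ a b, src a = ran b → ran (comp a b) = ran a
  assoc : ∀ a b c, src a = ran b → src b = ran c →
      comp (comp a b) c = comp a (comp b c)
  src_inv : ∀ a, src (inv a) = ran a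
  ran_inv : ∀ a, ran (inv a) = src a
  comp_inv : ∀ a, comp a (inv a) = ran a
  inv_comp : ∀ a, comp (inv a) a = src a

/-- A category system `(Λ, d, G, φ)`: a discrete groupoid `G` acting on the
LCSC `Λ` by partial isomorphisms preserving the length function `d` (the action
is the homomorphism `g ↦ φ(g) : θ(s(g))Λ → θ(r(g))Λ`, written `act`; `θ` is the
identification of the units of `G` with the objects of `Λ`, a bijection on
units), together with a category cocycle `cocy = φ(·,·)` satisfying the cocycle
identity and conditions (1)-(5) of a category cocycle. -/
structure CatSystem (C : LCSC) (G : Grpd) {Q : Type} (d : C.Mor → Q) where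
  θ : G.Mor → C.Mor
  act : G.Mor → C.Mor → C.Mor
  cocy : G.Mor → C.Mor → G.Mor
  θ_isId : ∀ u, G.src u = u → C.IsId (θ u)
  θ_inj : ∀ u v, G.src u = u → G.src v = v → θ u = θ v → u = v
  θ_surj : ∀ w, C.IsId w → ∃ u, G.src u = u ∧ θ u = w
  ran_act : ∀ g a, θ (G.src g) = C.ran a → C.ran (act g a) = θ (G.ran g)
  act_unit : ∀ g, act g (θ (G.src g)) = θ (G.ran g)
  d_act : ∀ g a, θ (G.src g) = C.ran a → d (act g a) = d a
  act_id : ∀ u a, G.src u = u → θ u = C.ran a → act u a = a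
  act_comp : ∀ g h a, G.src g = G.ran h → θ (G.src h) = C.ran a →
      act (G.comp g h) a = act g (act h a)
  act_inj : ∀ g a b, θ (G.src g) = C.ran a → θ (G.src g) = C.ran b →
      act g a = act g b → a = b
  cocy_identity : ∀ g h a, G.src g = G.ran h → θ (G.src h) = C.ran a →
      cocy (G.comp g h) a = G.comp (cocy g (act h a)) (cocy h a)
  cocy_unit : ∀ g, cocy g (θ (G.src g)) = g
  src_act : ∀ g a, θ (G.src g) = C.ran a →
      C.src (act g a) = θ (G.ran (cocy g a))
  cocy_id : ∀ u a, G.src u = u → θ u = C.ran a →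
      G.src (cocy u a) = cocy u a ∧ θ (cocy u a) = C.src a
  cocy_comp : ∀ g a b, θ (G.src g) = C.ran a → C.src a = C.ran b →
      cocy g (C.comp a b) = cocy (cocy g a) b
  act_morph : ∀ g a b, θ (G.src g) = C.ran a → C.src a = C.ran b →
      act g (C.comp a b) = C.comp (act g a) (act (cocy g a) b)

/-- A pair `(α, g)` is a morphism of the Zappa–Szép product `Λ ⋈ᵠ G`
when `s(α) = r(g)` (under the identification `θ` of units with objects). -/
def ZSValid {C : LCSC} {G : Grpd} {Q : Type} {d : C.Mor → Q}
    (S : CatSystem C G d) (p : C.Mor × G.Mor) : Prop :=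
  C.src p.1 = S.θ (G.ran p.2)

/-- `(α, g)` and `(β, h)` are composable in `Λ ⋈ᵠ G`: `s(α, g) = r(β, h)`. -/
def ZSComposable {C : LCSC} {G : Grpd} {Q : Type} {d : C.Mor → Q}
    (S : CatSystem C G d) (p q : C.Mor × G.Mor) : Prop :=
  S.θ (G.src p.2) = C.ran q.1

/-- Composition in the Zappa–Szép product:
`(α, g)(β, h) = (α(g·β), φ(g, β)h)`. -/
def ZSComp {C : LCSC} {G : Grpd} {Q : Type} {d : C.Mor → Q}
    (S : CatSystem C G d) (p q : C.Mor × G.Mor) : C.Mor × G.Mor :=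
  (C.comp p.1 (S.act p.2 q.1), G.comp (S.cocy p.2 q.1) q.2)

/-- The principal right ideal `(α, g)(Λ ⋈ᵠ G)` of `Λ ⋈ᵠ G`. -/
def ZSIdeal {C : LCSC} {G : Grpd} {Q : Type} {d : C.Mor → Q}
    (S : CatSystem C G d) (p : C.Mor × G.Mor) : Set (C.Mor × G.Mor) :=
  {x | ∃ q, ZSValid S q ∧ ZSComposable S p q ∧ x = ZSComp S p q}

/-- A morphism `(α, g)` of `Λ ⋈ᵠ G` is invertible: it has a two-sided inverse,
the composites being the identity morphisms of `Λ ⋈ᵠ G` (which are the pairs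
`(θ(u), u)` for `u` a unit of `G`). -/
def ZSInvertible {C : LCSC} {G : Grpd} {Q : Type} {d : C.Mor → Q}
    (S : CatSystem C G d) (p : C.Mor × G.Mor) : Prop :=
  ∃ q, ZSValid S q ∧ ZSComposable S p q ∧ ZSComposable S q p ∧
    (∃ u, G.src u = u ∧ S.θ u = C.ran p.1 ∧ ZSComp S p q = (S.θ u, u)) ∧
    (∃ u, G.src u = u ∧ S.θ u = C.ran q.1 ∧ ZSComp S q p = (S.θ u, u))

/-- `H ⊆ vΛ` is exhaustive at `v`. -/
def CExhaustive (C : LCSC) (v : C.Mor) (H : Set C.Mor) : Prop :=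
  ∀ γ, C.ran γ = v → ∃ β ∈ H, (C.Ideal β ∩ C.Ideal γ).Nonempty

/-- `F ⊆ (v,v)(Λ ⋈ᵠ G)` is exhaustive at `(v, v)`. -/
def ZSExhaustive {C : LCSC} {G : Grpd} {Q : Type} {d : C.Mor → Q}
    (S : CatSystem C G d) (v : C.Mor) (F : Set (C.Mor × G.Mor)) : Prop :=
  ∀ q, ZSValid S q → C.ran q.1 = v →
    ∃ p ∈ F, (ZSIdeal S p ∩ ZSIdeal S q).Nonempty

/-!
Up to the choice of the groupoid component, the principal ideal `(α, g)(Λ ⋈ᵠ G)` is `αΛ`: its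
first components lie in `αΛ` because `α(g·β) ∈ αΛ`, and conversely, for `x = αe ∈ αΛ` and `u` the
unit at `s(x)`, `(x, u) = (α, g)(g⁻¹·e, φ(g⁻¹, e))` by the cocycle identity. So common extensions
in `Λ ⋈ᵠ G` and in `Λ` correspond to each other.
-/

theorem LCSC.isId_src_s11 (C : LCSC) (a : C.Mor) : C.IsId (C.src a) :=
  ⟨C.src_src a, C.ran_src a⟩

theorem Grpd.ran_eq_self_of_src_eq_self (G : Grpd) {u : G.Mor} (hu : G.src u = u) :
    G.ran u = u := by
  rw [← hu, G.ran_src]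

namespace CatSystem

variable {C : LCSC} {G : Grpd} {Q : Type} {d : C.Mor → Q} (S : CatSystem C G d)

theorem act_act_inv {k : G.Mor} {e : C.Mor} (he : S.θ (G.ran k) = C.ran e) :
    S.act k (S.act (G.inv k) e) = e := by
  have he' : S.θ (G.src (G.inv k)) = C.ran e := by rwa [G.src_inv]
  rw [← S.act_comp k (G.inv k) e (G.ran_inv k).symm he', G.comp_inv]
  exact S.act_id _ _ (G.src_ran k) he

theorem cocy_act_inv {k : G.Mor} {e : C.Mor} (he : S.θ (G.ran k) = C.ran e) :
    G.comp (S.cocy k (S.act (G.inv k) e)) (S.cocy (G.inv k) e) = S.cocy (G.ran k) e := by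
  have he' : S.θ (G.src (G.inv k)) = C.ran e := by rwa [G.src_inv]
  rw [← S.cocy_identity k (G.inv k) e (G.ran_inv k).symm he', G.comp_inv]

theorem cocy_ran_eq_unit {k u : G.Mor} {e : C.Mor} (he : S.θ (G.ran k) = C.ran e)
    (hu : G.src u = u) (hθu : S.θ u = C.src e) : S.cocy (G.ran k) e = u := by
  obtain ⟨hunit, hθ⟩ := S.cocy_id (G.ran k) e (G.src_ran k) he
  exact S.θ_inj _ _ hunit hu (hθ.trans hθu.symm)

theorem zsValid_of_unit {a : C.Mor} {u : G.Mor} (hu : G.src u = u) (hθu : S.θ u = C.src a) :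
    ZSValid S (a, u) := by
  rw [ZSValid, G.ran_eq_self_of_src_eq_self hu, hθu]

theorem fst_mem_ideal_of_mem_zsIdeal {p x : C.Mor × G.Mor} (hp : ZSValid S p)
    (hx : x ∈ ZSIdeal S p) : x.1 ∈ C.Ideal p.1 := by
  obtain ⟨q, -, hpq, rfl⟩ := hx
  exact ⟨S.act p.2 q.1, by rw [S.ran_act _ _ hpq, hp], rfl⟩

theorem mem_zsIdeal_of_mem_ideal {p : C.Mor × G.Mor} {x : C.Mor} {u : G.Mor} (hp : ZSValid S p)
    (hx : x ∈ C.Ideal p.1) (hu : G.src u = u) (hθu : S.θ u = C.src x) :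
    (x, u) ∈ ZSIdeal S p := by
  obtain ⟨e, hpe, rfl⟩ := hx
  have he : S.θ (G.ran p.2) = C.ran e := hp.symm.trans hpe
  have he' : S.θ (G.src (G.inv p.2)) = C.ran e := by rwa [G.src_inv]
  refine ⟨(S.act (G.inv p.2) e, S.cocy (G.inv p.2) e), S.src_act _ _ he', ?_, ?_⟩
  · rw [ZSComposable, S.ran_act _ _ he', G.ran_inv]
  · rw [ZSComp, S.act_act_inv he, S.cocy_act_inv he,
      S.cocy_ran_eq_unit he hu (hθu.trans (C.src_comp _ _ hpe))]

end CatSystem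

theorem zs_exhaustive_iff_general (C : LCSC) (G : Grpd) {Q : Type}
    (d : C.Mor → Q) (S : CatSystem C G d)
    (v : C.Mor) (F : Set (C.Mor × G.Mor))
    (hF : ∀ p ∈ F, ZSValid S p ∧ C.ran p.1 = v) :
    ZSExhaustive S v F ↔
      CExhaustive C v {a | C.ran a = v ∧ ∃ g, (a, g) ∈ F} := by
  constructor
  · intro hZS γ hγ
    obtain ⟨u, hu, hθu⟩ := S.θ_surj _ (C.isId_src_s11 γ)
    have hγu : ZSValid S (γ, u) := S.zsValid_of_unit hu hθu
    obtain ⟨p, hpF, x, hxp, hxγ⟩ := hZS (γ, u) hγu hγ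
    exact ⟨p.1, ⟨(hF p hpF).2, p.2, hpF⟩, x.1,
      S.fst_mem_ideal_of_mem_zsIdeal (hF p hpF).1 hxp, S.fst_mem_ideal_of_mem_zsIdeal hγu hxγ⟩
  · intro hH q hq hqran
    obtain ⟨β, ⟨-, g, hβg⟩, x, hxβ, hxq⟩ := hH q.1 hqran
    obtain ⟨u, hu, hθu⟩ := S.θ_surj _ (C.isId_src_s11 x)
    exact ⟨(β, g), hβg, (x, u), S.mem_zsIdeal_of_mem_ideal (hF _ hβg).1 hxβ hu hθu,
      S.mem_zsIdeal_of_mem_ideal hq hxq hu hθu⟩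

/-- For an object `(v, v)` of `Λ ⋈ᵠ G` and
`F ⊆ (v, v)(Λ ⋈ᵠ G)`, with `H := {α ∈ vΛ : ∃ g, (α, g) ∈ F}`, the set `F` is
exhaustive at `(v, v)` if and only if `H` is exhaustive at `v`. -/
theorem zs_exhaustive_iff (C : LCSC) (G : Grpd) {Q : Type}
    [Group Q] (Γ : Submonoid Q) (hΓ : ∀ q ∈ Γ, q⁻¹ ∈ Γ → q = 1)
    (d : C.Mor → Q) (hd : C.LenFn Γ d) (S : CatSystem C G d)
    (v : C.Mor) (hv : C.IsId v) (F : Set (C.Mor × G.Mor))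
    (hF : ∀ p ∈ F, ZSValid S p ∧ C.ran p.1 = v) :
    ZSExhaustive S v F ↔
      CExhaustive C v {a | C.ran a = v ∧ ∃ g, (a, g) ∈ F} :=
  zs_exhaustive_iff_general C G d S v F hF
end

section
/- Let Λ be a left cancellative small category, let M be a conical monoid, and let d : Λ → M be a length function satisfying (LF1) and (LF2). Then a morphism α ∈ Λ is an atom of Λ if and only if d(α) is an atom of M. In particular, the set of atoms of Λ equals the union over atoms e of M of d⁻¹(e). -/
/-- `d : Λ → M` is a length function into the monoid `M`. -/
def LCSC.MLenFn (C : LCSC) {M : Type} [Monoid M] (d : C.Mor → M) : Prop :=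
  ∀ a b, C.src a = C.ran b → d (C.comp a b) = d a * d b

/-- (LF1): `d⁻¹(1) = Λ⁻¹`. -/
def LCSC.LF1 (C : LCSC) {M : Type} [Monoid M] (d : C.Mor → M) : Prop :=
  ∀ a, d a = 1 ↔ C.IsInvertible a

/-- (LF2): every factorization of `d(α)` in `M` lifts to a factorization of `α`. -/
def LCSC.LF2 (C : LCSC) {M : Type} [Monoid M] (d : C.Mor → M) : Prop :=
  ∀ a m₁ m₂, d a = m₁ * m₂ →
    ∃ a₁ a₂, C.src a₁ = C.ran a₂ ∧ a = C.comp a₁ a₂ ∧ d a₁ = m₁ ∧ d a₂ = m₂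

/-- The monoid `M` is conical: `m₁m₂ = 1` implies `m₁ = m₂ = 1`. -/
def Conical (M : Type) [Monoid M] : Prop :=
  ∀ m₁ m₂ : M, m₁ * m₂ = 1 → m₁ = 1 ∧ m₂ = 1

/-- `e ∈ M` is an atom: `e = m₁m₂` implies `m₁ = 1` or `m₂ = 1`. -/
def MAtom {M : Type} [Monoid M] (e : M) : Prop :=
  ∀ m₁ m₂ : M, e = m₁ * m₂ → m₁ = 1 ∨ m₂ = 1

/-- `M` is atomic: it is generated by its atoms. -/
def AtomicMonoid (M : Type) [Monoid M] : Prop :=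
  ∀ m : M, m ∈ Submonoid.closure {e : M | MAtom e}

/-- `α ∈ Λ` is an atom: whenever `α = βγ`, then `β ∈ Λ⁻¹` or `γ ∈ Λ⁻¹`. -/
def LCSC.CAtom (C : LCSC) (a : C.Mor) : Prop :=
  ∀ b c, C.src b = C.ran c → a = C.comp b c →
    C.IsInvertible b ∨ C.IsInvertible c

/-- `αΛ` is a maximal proper principal right ideal: it is properly contained in
`r(α)Λ` and maximal among principal right ideals properly contained in `r(α)Λ`. -/
def LCSC.MaxIdeal (C : LCSC) (a : C.Mor) : Prop :=
  C.Ideal a ⊂ C.Ideal (C.ran a) ∧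
  ∀ b : C.Mor, C.Ideal a ⊆ C.Ideal b → C.Ideal b ⊂ C.Ideal (C.ran a) →
    C.Ideal b = C.Ideal a

namespace LCSC

variable (C : LCSC) {M : Type} [Monoid M] {d : C.Mor → M}

theorem mAtom_of_cAtom (h1 : C.LF1 d) (h2 : C.LF2 d) {a : C.Mor} (ha : C.CAtom a) :
    MAtom (d a) := by
  intro m₁ m₂ hm
  obtain ⟨a₁, a₂, hcomp, rfl, rfl, rfl⟩ := h2 a m₁ m₂ hm
  exact (ha a₁ a₂ hcomp rfl).imp (h1 a₁).mpr (h1 a₂).mpr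

theorem cAtom_of_mAtom (hd : C.MLenFn d) (h1 : C.LF1 d) {a : C.Mor} (ha : MAtom (d a)) :
    C.CAtom a := by
  rintro b c hcomp rfl
  exact (ha (d b) (d c) (hd b c hcomp)).imp (h1 b).mp (h1 c).mp

theorem cAtom_iff_mAtom (hd : C.MLenFn d) (h1 : C.LF1 d) (h2 : C.LF2 d) (a : C.Mor) :
    C.CAtom a ↔ MAtom (d a) :=
  ⟨C.mAtom_of_cAtom h1 h2, C.cAtom_of_mAtom hd h1⟩

end LCSC

theorem lcsc_atom_iff_length_atom_general (C : LCSC) {M : Type} [Monoid M]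
    (d : C.Mor → M)
    (hd : C.MLenFn d) (h1 : C.LF1 d) (h2 : C.LF2 d) :
    (∀ a : C.Mor, C.CAtom a ↔ MAtom (d a)) ∧
    {a : C.Mor | C.CAtom a} = ⋃ e ∈ {e : M | MAtom e}, d ⁻¹' {e} := by
  have key := C.cAtom_iff_mAtom hd h1 h2
  rw [Set.biUnion_preimage_singleton]
  exact ⟨key, Set.ext key⟩

/-- For a length function `d : Λ → M` into a conical monoid
satisfying (LF1) and (LF2), a morphism `α` is an atom of `Λ` iff `d(α)` is an
atom of `M`; in particular the atoms of `Λ` are `⋃_{e atom of M} d⁻¹(e)`. -/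
theorem lcsc_atom_iff_length_atom (C : LCSC) {M : Type} [Monoid M]
    (hM : Conical M) (d : C.Mor → M)
    (hd : C.MLenFn d) (h1 : C.LF1 d) (h2 : C.LF2 d) :
    (∀ a : C.Mor, C.CAtom a ↔ MAtom (d a)) ∧
    {a : C.Mor | C.CAtom a} = ⋃ e ∈ {e : M | MAtom e}, d ⁻¹' {e} :=
  lcsc_atom_iff_length_atom_general C d hd h1 h2
end

section
/- Let Λ be a left cancellative small category and let d : Λ → Γ be a length function satisfying the weak factorization property. Let α, β ∈ Λ with α ⋒ β (i.e. αΛ ∩ βΛ ≠ ∅). Then α ≤ β if and only if d(α) ≤ d(β) in Γ. In particular, if d(α) = d(β) then α ≈ β (i.e. αΛ = βΛ). -/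
namespace LCSC

variable {C : LCSC}

theorem ideal_subset_of_le {a b : C.Mor} (h : C.le a b) : C.Ideal b ⊆ C.Ideal a := by
  obtain ⟨c, hc, rfl⟩ := h
  rintro x ⟨e, he, rfl⟩
  rw [C.src_comp a c hc] at he
  exact ⟨C.comp c e, by rw [C.ran_comp c e he, hc], C.assoc a c e hc he⟩

theorem le_trans {a b c : C.Mor} (hab : C.le a b) (hbc : C.le b c) : C.le a c :=
  ideal_subset_of_le hab hbc

theorem le_comp {a c : C.Mor} (h : C.src a = C.ran c) : C.le a (C.comp a c) :=
  ⟨c, h, rfl⟩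

theorem le_of_eq_comp_of_isInvertible {a x g : C.Mor} (hg : C.IsInvertible g)
    (hxg : C.src x = C.ran g) (ha : a = C.comp x g) : C.le a x := by
  obtain ⟨h, hgh, -, hgh_id, -⟩ := hg
  refine ⟨h, by rw [ha, C.src_comp x g hxg, hgh], ?_⟩
  rw [ha, C.assoc x g h hxg hgh, hgh_id, ← hxg, C.comp_src]

section Length

variable {Q : Type} [Group Q] {Γ : Submonoid Q} {d : C.Mor → Q}

theorem LenFn.inv_mul_mem_of_le (hd : C.LenFn Γ d) {a b : C.Mor} (h : C.le a b) :
    (d a)⁻¹ * d b ∈ Γ := by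
  obtain ⟨c, hc, rfl⟩ := h
  rw [hd.2 a c hc, inv_mul_cancel_left]
  exact hd.1 c

theorem le_of_comp_eq_comp_of_length_eq (hd : C.LenFn Γ d) (hwfp : C.WFP Γ d)
    {a b c e : C.Mor} (hc : C.src a = C.ran c) (he : C.src b = C.ran e)
    (hx : C.comp a c = C.comp b e) (hdab : d a = d b) : C.le a b := by
  have hdce : d c = d e := by
    have := congrArg d hx
    rwa [hd.2 a c hc, hd.2 b e he, hdab, mul_right_inj] at this
  obtain ⟨_, _, -, -, -, -, unique⟩ :=
    hwfp (C.comp a c) (d a) (d c) (hd.1 a) (hd.1 c) (hd.2 a c hc)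
  obtain ⟨g, -, hg, -, hxg, ha, -⟩ := unique a c hc rfl rfl rfl
  obtain ⟨_, -, -, -, hxg', hb, -⟩ := unique b e he hx hdab.symm hdce.symm
  exact le_trans (le_of_eq_comp_of_isInvertible hg hxg ha) (hb ▸ le_comp hxg')

theorem le_of_inv_mul_mem (hd : C.LenFn Γ d) (hwfp : C.WFP Γ d) {a b x : C.Mor}
    (hxa : x ∈ C.Ideal a) (hxb : x ∈ C.Ideal b) (h : (d a)⁻¹ * d b ∈ Γ) : C.le a b := by
  obtain ⟨c, hc, rfl⟩ := hxa
  obtain ⟨e, he, hx⟩ := hxb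
  obtain ⟨b₁, b₂, hb₁₂, rfl, hdb₁, -, -⟩ :=
    hwfp b (d a) ((d a)⁻¹ * d b) (hd.1 a) h (mul_inv_cancel_left _ _).symm
  have hb₂e : C.src b₂ = C.ran e := by rwa [C.src_comp b₁ b₂ hb₁₂] at he
  have hab₁ : C.le a b₁ :=
    le_of_comp_eq_comp_of_length_eq hd hwfp hc (by rwa [C.ran_comp b₂ e hb₂e])
      (by rw [hx, C.assoc b₁ b₂ e hb₁₂ hb₂e]) hdb₁.symm
  exact le_trans hab₁ (le_comp hb₁₂)

end Length

end LCSC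

theorem lcsc_wfp_le_iff_length_le_general (C : LCSC) {Q : Type} [Group Q]
    (Γ : Submonoid Q)
    (d : C.Mor → Q) (hd : C.LenFn Γ d) (hwfp : C.WFP Γ d)
    (a b : C.Mor) (hab : (C.Ideal a ∩ C.Ideal b).Nonempty) :
    (C.le a b ↔ (d a)⁻¹ * d b ∈ Γ) ∧
    (d a = d b → C.Ideal a = C.Ideal b) := by
  obtain ⟨x, hxa, hxb⟩ := hab
  have le_of_length_eq : ∀ {p q : C.Mor}, x ∈ C.Ideal p → x ∈ C.Ideal q → d p = d q → C.le p q :=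
    fun hxp hxq hpq => LCSC.le_of_inv_mul_mem hd hwfp hxp hxq
      (by rw [hpq, inv_mul_cancel]; exact Γ.one_mem)
  refine ⟨⟨hd.inv_mul_mem_of_le, LCSC.le_of_inv_mul_mem hd hwfp hxa hxb⟩, fun hdab => ?_⟩
  exact (LCSC.ideal_subset_of_le (le_of_length_eq hxb hxa hdab.symm)).antisymm
    (LCSC.ideal_subset_of_le (le_of_length_eq hxa hxb hdab))

/-- If `d : Λ → Γ` is a length function satisfying the WFP and
`α ⋒ β` (i.e. `αΛ ∩ βΛ ≠ ∅`), then `α ≤ β` iff `d(α) ≤ d(β)` in `Γ` (i.e.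
`d(α)⁻¹ d(β) ∈ Γ`); in particular `d(α) = d(β)` implies `αΛ = βΛ`. -/
theorem lcsc_wfp_le_iff_length_le (C : LCSC) {Q : Type} [Group Q]
    (Γ : Submonoid Q) (hΓ : ∀ q ∈ Γ, q⁻¹ ∈ Γ → q = 1)
    (d : C.Mor → Q) (hd : C.LenFn Γ d) (hwfp : C.WFP Γ d)
    (a b : C.Mor) (hab : (C.Ideal a ∩ C.Ideal b).Nonempty) :
    (C.le a b ↔ (d a)⁻¹ * d b ∈ Γ) ∧
    (d a = d b → C.Ideal a = C.Ideal b) :=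
  lcsc_wfp_le_iff_length_le_general C Γ d hd hwfp a b hab
end
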